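/- arXiv:1901.04092 — 3 statements merged into one kernel-verified Lean document; each statement's English description precedes it below -/
import Mathlib

section
/- Let f : ℝ → ℝ be convex and non-decreasing, and let g : Set X → ℝ be a non-increasing supermodular set function on subsets of a finite set X (i.e., g(A ∪ B) + g(A ∩ B) ≥ g(A) + g(B) and A ⊆ B implies g(A) ≥ g(B)). Then the composition h(S) = f(g(S)) is supermodular. -/
lemma convex_sum_endpoints (f : ℝ → ℝ) (hf : ConvexOn ℝ Set.univ f)
    {a d x : ℝ} (h1 : a ≤ x) (h2 : x ≤ d) :
    f x + f (a + d - x) ≤ f a + f d := by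
  rcases eq_or_lt_of_le (h1.trans h2) with h | h
  · have hx : x = a := le_antisymm (by linarith) h1
    subst hx
    have h3 : x + d - x = d := by ring
    rw [h3]
  · set t := (d - x) / (d - a) with ht
    have hda : 0 < d - a := by linarith
    have ht0 : 0 ≤ t := div_nonneg (by linarith) hda.le
    have ht1 : t ≤ 1 := by rw [div_le_one hda]; linarith
    have hkey : t * (d - a) = d - x := by
      rw [ht]; field_simp
    have hx : x = t * a + (1 - t) * d := by nlinarith [hkey]
    have hy : a + d - x = (1 - t) * a + t * d := by nlinarith [hkey]
    have c1 := hf.2 (Set.mem_univ a) (Set.mem_univ d) ht0 (by linarith : (0:ℝ) ≤ 1 - t) (by ring)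
    have c2 := hf.2 (Set.mem_univ a) (Set.mem_univ d) (by linarith : (0:ℝ) ≤ 1 - t) ht0 (by ring)
    simp only [smul_eq_mul] at c1 c2
    rw [hy, hx]
    calc f (t * a + (1 - t) * d) + f ((1 - t) * a + t * d)
        ≤ (t * f a + (1 - t) * f d) + ((1 - t) * f a + t * f d) := add_le_add c1 c2
      _ = f a + f d := by ring

/-- If `f : ℝ → ℝ` is convex and non-decreasing and `g : Set X → ℝ` is a
non-increasing supermodular set function on a finite set `X`, then `f ∘ g` is supermodular. -/
theorem supermodular_comp_convex_nonincreasing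
    {X : Type*} [Fintype X] (f : ℝ → ℝ) (g : Set X → ℝ)
    (hf_conv : ConvexOn ℝ Set.univ f) (hf_mono : Monotone f)
    (hg_antitone : ∀ A B : Set X, A ⊆ B → g B ≤ g A)
    (hg_supermod : ∀ A B : Set X, g A + g B ≤ g (A ∪ B) + g (A ∩ B)) :
    ∀ A B : Set X, f (g A) + f (g B) ≤ f (g (A ∪ B)) + f (g (A ∩ B)) := by
  intro A B
  wlog hAB : g A ≤ g B generalizing A B
  · have := this B A (le_of_not_ge hAB)
    rw [Set.union_comm, Set.inter_comm] at this
    linarith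
  set a := g (A ∪ B)
  set d := g (A ∩ B)
  have ha : a ≤ g A := hg_antitone A (A ∪ B) Set.subset_union_left
  have hd : g B ≤ d := hg_antitone (A ∩ B) B Set.inter_subset_right
  have hsup := hg_supermod A B
  have hB : g B ≤ a + d - g A := by linarith
  have h1 : f (g B) ≤ f (a + d - g A) := hf_mono hB
  have h2 : f (g A) + f (a + d - g A) ≤ f a + f d :=
    convex_sum_endpoints f hf_conv ha (by linarith)
  linarith
end

section
/- If f : ℝ → ℝ is convex and non-decreasing and g : Set X → ℝ is non-decreasing and supermodular, then f ∘ g is supermodular. (Variant of the composition lemma with g non-decreasing.) -/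
lemma convex_increment {f : ℝ → ℝ} (hf : ConvexOn ℝ Set.univ f)
    {x y t : ℝ} (hxy : x ≤ y) (ht : 0 ≤ t) :
    f (x + t) - f x ≤ f (y + t) - f y := by
  rcases eq_or_lt_of_le ht with rfl | ht
  · simp
  rcases eq_or_lt_of_le hxy with rfl | hxy
  · simp
  have h1 := hf.secant_mono (Set.mem_univ x) (Set.mem_univ (x + t)) (Set.mem_univ (y + t))
    (by linarith) (by linarith) (by linarith)
  have h2 := hf.secant_mono (Set.mem_univ (y + t)) (Set.mem_univ x) (Set.mem_univ y)
    (by linarith) (by linarith) hxy.le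
  have hd1 : (0:ℝ) < x + t - x := by linarith
  have hd2 : (0:ℝ) < y + t - x := by linarith
  have hd3 : (0:ℝ) < t := ht
  rw [div_le_div_iff₀ hd1 hd2] at h1
  rw [show x - (y + t) = -(y + t - x) by ring, show f x - f (y + t) = -(f (y + t) - f x) by ring,
    neg_div_neg_eq, show y - (y + t) = -t by ring, show f y - f (y + t) = -(f (y + t) - f y) by ring,
    neg_div_neg_eq, div_le_div_iff₀ hd2 hd3] at h2
  nlinarith [h1, h2]

/-- If `f : ℝ → ℝ` is convex and non-decreasing and `g : Set X → ℝ` is a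
non-decreasing supermodular set function on a finite set `X`, then `f ∘ g` is supermodular. -/
theorem supermodular_comp_convex_nondecreasing
    {X : Type*} [Fintype X] (f : ℝ → ℝ) (g : Set X → ℝ)
    (hf_conv : ConvexOn ℝ Set.univ f) (hf_mono : Monotone f)
    (hg_mono : ∀ A B : Set X, A ⊆ B → g A ≤ g B)
    (hg_supermod : ∀ A B : Set X, g A + g B ≤ g (A ∪ B) + g (A ∩ B)) :
    ∀ A B : Set X, f (g A) + f (g B) ≤ f (g (A ∪ B)) + f (g (A ∩ B)) := by
  intro A B
  set a := g (A ∩ B)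
  set d := g A - a with hd
  have hd0 : 0 ≤ d := sub_nonneg.2 (hg_mono _ _ Set.inter_subset_left)
  have hab : a ≤ g B := hg_mono _ _ Set.inter_subset_right
  have key : f (a + d) - f a ≤ f (g B + d) - f (g B) := convex_increment hf_conv hab hd0
  have h1 : g B + d ≤ g (A ∪ B) := by have := hg_supermod A B; simp [hd, a] at *; linarith
  have h2 : f (g B + d) ≤ f (g (A ∪ B)) := hf_mono h1
  have : a + d = g A := by simp [hd]
  rw [this] at key
  linarith
end

section
/- If g : Set X → ℝ is a non-increasing supermodular set function and f : ℝ → ℝ is convex and non-decreasing, then F(S) = f(g(∅)) − f(g(S)) is a non-decreasing submodular set function. -/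
/-!
Since `g` is antitone, `g (A ∪ B) ≤ g A, g B ≤ g (A ∩ B)`, and supermodularity says the pair
`(g A, g B)` has sum at most that of the outer pair `(g (A ∪ B), g (A ∩ B))`. Raising `g B` until the
sums agree only increases `f (g A) + f (g B)` because `f` is monotone, and for
pairs with equal sums convexity of `f` favours the more spread-out one.
-/

open Set

def Supermodular {α : Type*} [Lattice α] (g : α → ℝ) : Prop :=
  ∀ a b, g a + g b ≤ g (a ⊔ b) + g (a ⊓ b)

theorem ConvexOn.map_add_map_le_of_add_eq {s : Set ℝ} {f : ℝ → ℝ} (hf : ConvexOn ℝ s f)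
    {u v x y : ℝ} (hu : u ∈ s) (hv : v ∈ s) (hux : u ≤ x) (hxv : x ≤ v) (hxy : x + y = u + v) :
    f x + f y ≤ f u + f v := by
  obtain rfl | huv := (hux.trans hxv).eq_or_lt
  · obtain rfl : x = u := le_antisymm hxv hux
    obtain rfl : y = x := by linarith
    rfl
  -- `x` and `y` are the combinations of `u, v` with the weights `(t, 1 - t)` and `(1 - t, t)`.
  set t := (v - x) / (v - u)
  have hvu : 0 < v - u := sub_pos.mpr huv
  have htvu : t * (v - u) = v - x := div_mul_cancel₀ _ hvu.ne'
  have ht₀ : 0 ≤ t := div_nonneg (sub_nonneg.mpr hxv) hvu.le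
  have ht₁ : t ≤ 1 := (div_le_one hvu).mpr (by linarith)
  have hx : t • u + (1 - t) • v = x := by simp only [smul_eq_mul]; linear_combination -htvu
  have hy : (1 - t) • u + t • v = y := by simp only [smul_eq_mul]; linear_combination htvu - hxy
  have hfx := hf.2 hu hv ht₀ (sub_nonneg.mpr ht₁) (add_sub_cancel t 1)
  have hfy := hf.2 hu hv (sub_nonneg.mpr ht₁) ht₀ (sub_add_cancel 1 t)
  rw [hx] at hfx
  rw [hy] at hfy
  simp only [smul_eq_mul] at hfx hfy
  linarith

theorem ConvexOn.map_add_map_le_of_add_le {f : ℝ → ℝ} (hf : ConvexOn ℝ univ f) (hf' : Monotone f)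
    {u v x y : ℝ} (hux : u ≤ x) (hxv : x ≤ v) (hxy : x + y ≤ u + v) :
    f x + f y ≤ f u + f v :=
  calc f x + f y ≤ f x + f (u + v - x) := add_le_add_right (hf' (by linarith)) _
    _ ≤ f u + f v := hf.map_add_map_le_of_add_eq (mem_univ u) (mem_univ v) hux hxv (by ring)

theorem Supermodular.convexOn_comp_of_antitone {α : Type*} [Lattice α] {f : ℝ → ℝ} {g : α → ℝ}
    (hg : Supermodular g) (hg' : Antitone g) (hf : ConvexOn ℝ univ f) (hf' : Monotone f) :
    Supermodular (f ∘ g) := fun a b =>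
  hf.map_add_map_le_of_add_le hf' (hg' le_sup_left) (hg' inf_le_left) (hg a b)

theorem caching_gain_monotone_submodular_general
    {X : Type*} (f : ℝ → ℝ) (g : Set X → ℝ)
    (hf_conv : ConvexOn ℝ Set.univ f) (hf_mono : Monotone f)
    (hg_antitone : ∀ A B : Set X, A ⊆ B → g B ≤ g A)
    (hg_supermod : ∀ A B : Set X, g A + g B ≤ g (A ∪ B) + g (A ∩ B)) :
    (∀ A B : Set X, A ⊆ B →
      f (g (∅ : Set X)) - f (g A) ≤ f (g (∅ : Set X)) - f (g B)) ∧
    (∀ A B : Set X,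
      (f (g (∅ : Set X)) - f (g (A ∪ B))) + (f (g (∅ : Set X)) - f (g (A ∩ B))) ≤
        (f (g (∅ : Set X)) - f (g A)) + (f (g (∅ : Set X)) - f (g B))) := by
  have hfg : Supermodular (f ∘ g) :=
    Supermodular.convexOn_comp_of_antitone hg_supermod hg_antitone hf_conv hf_mono
  refine ⟨fun A B hAB => sub_le_sub_left (hf_mono (hg_antitone A B hAB)) _, fun A B => ?_⟩
  have := hfg A B
  simp only [Function.comp_apply, Set.sup_eq_union, Set.inf_eq_inter] at this
  linarith

/-- If `g` is non-increasing supermodular and `f` is convex non-decreasing,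
then `F S = f (g ∅) - f (g S)` is non-decreasing and submodular. -/
theorem caching_gain_monotone_submodular
    {X : Type*} [Fintype X] (f : ℝ → ℝ) (g : Set X → ℝ)
    (hf_conv : ConvexOn ℝ Set.univ f) (hf_mono : Monotone f)
    (hg_antitone : ∀ A B : Set X, A ⊆ B → g B ≤ g A)
    (hg_supermod : ∀ A B : Set X, g A + g B ≤ g (A ∪ B) + g (A ∩ B)) :
    (∀ A B : Set X, A ⊆ B →
      f (g (∅ : Set X)) - f (g A) ≤ f (g (∅ : Set X)) - f (g B)) ∧
    (∀ A B : Set X,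
      (f (g (∅ : Set X)) - f (g (A ∪ B))) + (f (g (∅ : Set X)) - f (g (A ∩ B))) ≤
        (f (g (∅ : Set X)) - f (g A)) + (f (g (∅ : Set X)) - f (g B))) :=
  caching_gain_monotone_submodular_general f g hf_conv hf_mono hg_antitone hg_supermod
end
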